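/- arXiv:1206.4113 — 2 statements merged into one kernel-verified Lean document; each statement's English description precedes it below -/
import Mathlib

section
/- Let Π be positive semidefinite, μ_Π = sup_ψ (Tr(Π π_ψ) − E(ψ)) attained, and X = Π − μ_Π I. If the solution set R(Π) = { ψ : Tr(Π π_ψ) − E(ψ) = μ_Π } is such that a trace-one density operator ρ lies in the convex hull of { π_ψ : ψ ∈ R(Π) }, then E(ρ) = Tr(Xρ), i.e., the convex-roof value of ρ equals Tr((Π − μ_Π I)ρ). -/
open Matrix ComplexOrder

noncomputable section

/-- Rank-one projector onto the vector `ψ`. -/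
def proj {d : ℕ} (ψ : Fin d → ℂ) : Matrix (Fin d) (Fin d) ℂ := vecMulVec ψ (star ψ)

/-- `ψ` is a unit vector (pure state). -/
def IsUnitVec {d : ℕ} (ψ : Fin d → ℂ) : Prop := star ψ ⬝ᵥ ψ = 1

/-- Real part of `Tr(X ρ)`. -/
def wTr {d : ℕ} (X ρ : Matrix (Fin d) (Fin d) ℂ) : ℝ := ((X * ρ).trace).re

/-- `X` does not overestimate `E` on pure states. -/
def IsWitness {d : ℕ} (E : (Fin d → ℂ) → ℝ) (X : Matrix (Fin d) (Fin d) ℂ) : Prop :=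
  ∀ ψ, IsUnitVec ψ → wTr X (proj ψ) ≤ E ψ

/-- The set of average pure-state values `Σ p_i E(ψ_i)` over all pure-state
decompositions of `ρ`. -/
def decompVals {d : ℕ} (E : (Fin d → ℂ) → ℝ) (ρ : Matrix (Fin d) (Fin d) ℂ) : Set ℝ :=
  { r | ∃ (m : ℕ) (p : Fin m → ℝ) (ψ : Fin m → Fin d → ℂ),
      (∀ i, 0 ≤ p i) ∧ (∑ i, p i) = 1 ∧ (∀ i, IsUnitVec (ψ i)) ∧
      ρ = ∑ i, (p i : ℂ) • proj (ψ i) ∧ r = ∑ i, p i * E (ψ i) }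

/-- Convex-roof extension of `E` to mixed states. -/
def Eroof {d : ℕ} (E : (Fin d → ℂ) → ℝ) (ρ : Matrix (Fin d) (Fin d) ℂ) : ℝ :=
  sInf (decompVals E ρ)



lemma trace_proj {d : ℕ} {ψ : Fin d → ℂ} (h : IsUnitVec ψ) : (proj ψ).trace = 1 := by
  simp only [proj, Matrix.trace, Matrix.diag, vecMulVec_apply]
  rw [← h]
  simp [dotProduct, mul_comm]

lemma wTr_lin {d : ℕ} (X : Matrix (Fin d) (Fin d) ℂ) {m : ℕ} (p : Fin m → ℝ)
    (A : Fin m → Matrix (Fin d) (Fin d) ℂ) :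
    wTr X (∑ i, (p i : ℂ) • A i) = ∑ i, p i * wTr X (A i) := by
  simp only [wTr, Finset.mul_sum, Matrix.mul_sum, Matrix.mul_smul, Matrix.trace_sum,
    Matrix.trace_smul, Complex.re_sum]
  congr 1; ext i
  simp [Complex.smul_re]

lemma wTr_X_proj {d : ℕ} (P : Matrix (Fin d) (Fin d) ℂ) (μ : ℝ) {ψ : Fin d → ℂ}
    (h : IsUnitVec ψ) : wTr (P - (μ : ℂ) • 1) (proj ψ) = wTr P (proj ψ) - μ := by
  simp only [wTr, Matrix.sub_mul, Matrix.smul_mul, Matrix.one_mul, Matrix.trace_sub,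
    Matrix.trace_smul, trace_proj h]
  simp [Complex.smul_re]

/-- if `ρ` lies in the convex hull of the projectors onto the pure
states attaining `μ_Π`, then the convex roof of `ρ` equals `Tr((Π − μ_Π I)ρ)`. -/
theorem stmt13 {d : ℕ} (hd : 0 < d) (E : (Fin d → ℂ) → ℝ) (hE : ∀ ψ, 0 ≤ E ψ)
    (P : Matrix (Fin d) (Fin d) ℂ) (hP : P.PosSemidef)
    (μ : ℝ) (hμ : IsLUB {s : ℝ | ∃ ψ, IsUnitVec ψ ∧ s = wTr P (proj ψ) - E ψ} μ)
    (ρ : Matrix (Fin d) (Fin d) ℂ) (hρ : ρ.PosSemidef) (htr : ρ.trace = 1)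
    (hconv : ρ ∈ convexHull ℝ
      {M : Matrix (Fin d) (Fin d) ℂ |
        ∃ φ, IsUnitVec φ ∧ wTr P (proj φ) - E φ = μ ∧ M = proj φ}) :
    Eroof E ρ = wTr (P - (μ : ℂ) • 1) ρ := by
  set X := P - (μ : ℂ) • 1 with hX
  have hwit : ∀ ψ, IsUnitVec ψ → wTr X (proj ψ) ≤ E ψ := by
    intro ψ hψ
    have := hμ.1 ⟨ψ, hψ, rfl⟩
    rw [wTr_X_proj P μ hψ]
    linarith
  have hlb : ∀ r ∈ decompVals E ρ, wTr X ρ ≤ r := by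
    rintro r ⟨m, p, ψ, h0, h1, hu, hρeq, rfl⟩
    rw [hρeq, wTr_lin]
    exact Finset.sum_le_sum fun i _ => mul_le_mul_of_nonneg_left (hwit _ (hu i)) (h0 i)
  rw [mem_convexHull_iff_exists_fintype] at hconv
  obtain ⟨ι, _, w, z, hw0, hw1, hz, hx⟩ := hconv
  choose φ hφu hφμ hφp using hz
  set e := Fintype.equivFin ι with he
  set m := Fintype.card ι
  set p : Fin m → ℝ := fun i => w (e.symm i)
  set ψ : Fin m → Fin d → ℂ := fun i => φ (e.symm i)
  have hρeq : ρ = ∑ i, (p i : ℂ) • proj (ψ i) := by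
    rw [← hx]
    rw [← Fintype.sum_equiv e (fun i => w i • z i) (fun i => (p i : ℂ) • proj (ψ i))]
    intro i
    simp only [p, ψ, Equiv.symm_apply_apply, hφp]
    ext a b
    simp [Complex.real_smul]
  have hmem : (∑ i, p i * E (ψ i)) ∈ decompVals E ρ := by
    refine ⟨m, p, ψ, fun i => hw0 _, ?_, fun i => hφu _, hρeq, rfl⟩
    rw [← hw1]
    exact Fintype.sum_equiv e.symm _ _ fun i => rfl
  have hval : (∑ i, p i * E (ψ i)) = wTr X ρ := by
    rw [hρeq, wTr_lin]
    congr 1; ext i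
    rw [wTr_X_proj P μ (hφu _)]
    have := hφμ (e.symm i)
    congr 1
    linarith
  exact le_antisymm (hval ▸ csInf_le ⟨wTr X ρ, hlb⟩ hmem) (le_csInf ⟨_, hmem⟩ hlb)

end
end

section
/- For the three-qubit GHZ state |GHZ⟩ = (|000⟩ + |111⟩)/√2, the extensive three-tangle on the generalized-Schmidt-form state |Ψ⟩ = λ₀|000⟩ + λ₁e^{iφ}|100⟩ + λ₂|101⟩ + λ₃|110⟩ + λ₄|111⟩ equals T₃(|Ψ⟩) = 2λ₀λ₄; in particular T₃(|GHZ⟩) = 1 and T₃(|W⟩) = 0 for |W⟩ = (|100⟩+|010⟩+|001⟩)/√3. -/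
/-!
The three-tangle is four times the modulus of Cayley's hyperdeterminant. If the amplitudes
at `001`, `010` and `011` vanish, as for the generalized Schmidt form and for GHZ, every
monomial except `a₀₀₀² a₁₁₁²` drops out, so `T₃ = 2 |a₀₀₀| |a₁₁₁|`. For a state supported
on the weight-one basis vectors, as W is, every monomial contains a vanishing amplitude.
-/

noncomputable section

/-- First invariant piece of Cayley's hyperdeterminant for three-qubit amplitudes. -/
def d1 (a : Fin 2 → Fin 2 → Fin 2 → ℂ) : ℂ :=
  (a 0 0 0) ^ 2 * (a 1 1 1) ^ 2 + (a 0 0 1) ^ 2 * (a 1 1 0) ^ 2 +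
    (a 0 1 0) ^ 2 * (a 1 0 1) ^ 2 + (a 1 0 0) ^ 2 * (a 0 1 1) ^ 2

/-- Second invariant piece of Cayley's hyperdeterminant. -/
def d2 (a : Fin 2 → Fin 2 → Fin 2 → ℂ) : ℂ :=
  a 0 0 0 * a 1 1 1 * a 0 1 1 * a 1 0 0 + a 0 0 0 * a 1 1 1 * a 1 0 1 * a 0 1 0 +
    a 0 0 0 * a 1 1 1 * a 1 1 0 * a 0 0 1 + a 0 1 1 * a 1 0 0 * a 1 0 1 * a 0 1 0 +
    a 0 1 1 * a 1 0 0 * a 1 1 0 * a 0 0 1 + a 1 0 1 * a 0 1 0 * a 1 1 0 * a 0 0 1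

/-- Third invariant piece of Cayley's hyperdeterminant. -/
def d3 (a : Fin 2 → Fin 2 → Fin 2 → ℂ) : ℂ :=
  a 0 0 0 * a 1 1 0 * a 1 0 1 * a 0 1 1 + a 1 1 1 * a 0 0 1 * a 0 1 0 * a 1 0 0

/-- The three-tangle (Coffman–Kundu–Wootters residual tangle) of a pure three-qubit
state with amplitudes `a i j k`. -/
def tau3 (a : Fin 2 → Fin 2 → Fin 2 → ℂ) : ℝ :=
  4 * ‖d1 a - 2 * d2 a + 4 * d3 a‖

/-- The extensive three-tangle `T₃ = √τ₃` of a pure three-qubit state. -/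
def T3 (a : Fin 2 → Fin 2 → Fin 2 → ℂ) : ℝ := Real.sqrt (tau3 a)

theorem tau3_eq_of_generalized_schmidt (a : Fin 2 → Fin 2 → Fin 2 → ℂ)
    (h001 : a 0 0 1 = 0) (h010 : a 0 1 0 = 0) (h011 : a 0 1 1 = 0) :
    tau3 a = 4 * ‖a 0 0 0 * a 1 1 1‖ ^ 2 := by
  have hdet : d1 a - 2 * d2 a + 4 * d3 a = (a 0 0 0 * a 1 1 1) ^ 2 := by
    simp only [d1, d2, d3, h001, h010, h011]
    ring
  rw [tau3, hdet, norm_pow]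

theorem T3_eq_of_generalized_schmidt (a : Fin 2 → Fin 2 → Fin 2 → ℂ)
    (h001 : a 0 0 1 = 0) (h010 : a 0 1 0 = 0) (h011 : a 0 1 1 = 0) :
    T3 a = 2 * ‖a 0 0 0‖ * ‖a 1 1 1‖ := by
  rw [T3, tau3_eq_of_generalized_schmidt a h001 h010 h011,
    show (4 : ℝ) * ‖a 0 0 0 * a 1 1 1‖ ^ 2 = (2 * ‖a 0 0 0 * a 1 1 1‖) ^ 2 by ring,
    Real.sqrt_sq (by positivity), norm_mul, mul_assoc]

theorem T3_eq_zero_of_weight_one_support (a : Fin 2 → Fin 2 → Fin 2 → ℂ)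
    (h000 : a 0 0 0 = 0) (h011 : a 0 1 1 = 0) (h101 : a 1 0 1 = 0) (h110 : a 1 1 0 = 0)
    (h111 : a 1 1 1 = 0) :
    T3 a = 0 := by
  simp [T3, tau3, d1, d2, d3, h000, h011, h101, h110, h111]

theorem stmt15_general (l0 l1 l2 l3 l4 φ : ℝ)
    (h0 : 0 ≤ l0) (h4 : 0 ≤ l4)
    (a : Fin 2 → Fin 2 → Fin 2 → ℂ)
    (ha : a = fun i j k =>
      if (i, j, k) = ((0 : Fin 2), (0 : Fin 2), (0 : Fin 2)) then (l0 : ℂ)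
      else if (i, j, k) = ((1 : Fin 2), (0 : Fin 2), (0 : Fin 2)) then
        (l1 : ℂ) * Complex.exp (φ * Complex.I)
      else if (i, j, k) = ((1 : Fin 2), (0 : Fin 2), (1 : Fin 2)) then (l2 : ℂ)
      else if (i, j, k) = ((1 : Fin 2), (1 : Fin 2), (0 : Fin 2)) then (l3 : ℂ)
      else if (i, j, k) = ((1 : Fin 2), (1 : Fin 2), (1 : Fin 2)) then (l4 : ℂ)
      else 0) :
    T3 a = 2 * l0 * l4 ∧
    T3 (fun i j k => if i = j ∧ j = k then ((Real.sqrt 2)⁻¹ : ℂ) else 0) = 1 ∧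
    T3 (fun i j k => if (i : ℕ) + (j : ℕ) + (k : ℕ) = 1
        then ((Real.sqrt 3)⁻¹ : ℂ) else 0) = 0 := by
  subst ha
  refine ⟨?_, ?_, ?_⟩
  · rw [T3_eq_of_generalized_schmidt _ (by simp) (by simp) (by simp)]
    simp [abs_of_nonneg h0, abs_of_nonneg h4]
  · rw [T3_eq_of_generalized_schmidt _ (by simp) (by simp) (by simp)]
    simp only [Fin.isValue, and_self, if_true, norm_inv, Complex.norm_real, Real.norm_eq_abs,
      abs_of_nonneg (Real.sqrt_nonneg 2)]
    rw [mul_assoc, ← mul_inv, Real.mul_self_sqrt zero_le_two]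
    norm_num
  · exact T3_eq_zero_of_weight_one_support _ (by simp) (by simp) (by simp) (by simp) (by simp)

/-- on the generalized-Schmidt-form state
`|Ψ⟩ = λ₀|000⟩ + λ₁e^{iφ}|100⟩ + λ₂|101⟩ + λ₃|110⟩ + λ₄|111⟩` the extensive
three-tangle equals `2λ₀λ₄`; in particular `T₃(GHZ) = 1` and `T₃(W) = 0`. -/
theorem stmt15 (l0 l1 l2 l3 l4 φ : ℝ)
    (h0 : 0 ≤ l0) (h1 : 0 ≤ l1) (h2 : 0 ≤ l2) (h3 : 0 ≤ l3) (h4 : 0 ≤ l4)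
    (hnorm : l0 ^ 2 + l1 ^ 2 + l2 ^ 2 + l3 ^ 2 + l4 ^ 2 = 1)
    (a : Fin 2 → Fin 2 → Fin 2 → ℂ)
    (ha : a = fun i j k =>
      if (i, j, k) = ((0 : Fin 2), (0 : Fin 2), (0 : Fin 2)) then (l0 : ℂ)
      else if (i, j, k) = ((1 : Fin 2), (0 : Fin 2), (0 : Fin 2)) then
        (l1 : ℂ) * Complex.exp (φ * Complex.I)
      else if (i, j, k) = ((1 : Fin 2), (0 : Fin 2), (1 : Fin 2)) then (l2 : ℂ)
      else if (i, j, k) = ((1 : Fin 2), (1 : Fin 2), (0 : Fin 2)) then (l3 : ℂ)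
      else if (i, j, k) = ((1 : Fin 2), (1 : Fin 2), (1 : Fin 2)) then (l4 : ℂ)
      else 0) :
    T3 a = 2 * l0 * l4 ∧
    T3 (fun i j k => if i = j ∧ j = k then ((Real.sqrt 2)⁻¹ : ℂ) else 0) = 1 ∧
    T3 (fun i j k => if (i : ℕ) + (j : ℕ) + (k : ℕ) = 1
        then ((Real.sqrt 3)⁻¹ : ℂ) else 0) = 0 :=
  stmt15_general l0 l1 l2 l3 l4 φ h0 h4 a ha

end
end
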